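/- arXiv:2507.01932 — 7 statements merged into one kernel-verified Lean document; each statement's English description precedes it below -/
import Mathlib

section
/- Let f : ℝⁿ × ℝᵐ → ℝ and let F*(x) = max_y f(x,y) over a set 𝒴, with Y*(x) the set of maximizers. Suppose F* is differentiable at a point x, and for each y ∈ 𝒴 the map t ↦ f(x + t d, y) is differentiable at t = 0 with derivative ⟨∇ₓ f(x,y), d⟩. Then for every y* ∈ Y*(x) and every direction d ∈ ℝⁿ, one has ⟨∇F*(x), d⟩ ≥ ⟨∇ₓ f(x, y*), d⟩; consequently ∇F*(x) = ∇ₓ f(x, y*). -/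
open RealInnerProductSpace

/-- If `g ≤ F` touch at `x`, then `t ↦ F (x + t • v) - g (x + t • v)` has a minimum at `0`,
so its derivative vanishes there. -/
theorem HasLineDerivAt.eq_of_le_of_eq {E : Type*} [AddCommGroup E] [Module ℝ E]
    {F g : E → ℝ} {F' g' : ℝ} {x v : E}
    (hg : HasLineDerivAt ℝ g g' x v) (hF : HasLineDerivAt ℝ F F' x v)
    (hle : g ≤ F) (heq : g x = F x) : g' = F' := by
  have hmin : IsLocalMin (fun t : ℝ => F (x + t • v) - g (x + t • v)) 0 :=
    IsMinOn.isLocalMin (fun t _ => by simpa [heq] using hle (x + t • v)) Filter.univ_mem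
  linarith [hmin.hasDerivAt_eq_zero (hF.sub hg)]

theorem HasGradientAt.hasLineDerivAt {E : Type*} [NormedAddCommGroup E]
    [InnerProductSpace ℝ E] [CompleteSpace E] {F : E → ℝ} {g x : E}
    (hF : HasGradientAt F g x) (v : E) : HasLineDerivAt ℝ F ⟪g, v⟫ x v :=
  hF.hasFDerivAt.hasLineDerivAt v

/-- Danskin-type gradient formula for the maximal function. -/
theorem stmt_1 {n m : ℕ}
    (f : EuclideanSpace ℝ (Fin n) → EuclideanSpace ℝ (Fin m) → ℝ)
    (Y : Set (EuclideanSpace ℝ (Fin m)))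
    (Fstar : EuclideanSpace ℝ (Fin n) → ℝ)
    (hmax : ∀ z, ∀ y ∈ Y, f z y ≤ Fstar z)
    (x : EuclideanSpace ℝ (Fin n))
    (gF : EuclideanSpace ℝ (Fin n))
    (hgF : HasGradientAt Fstar gF x)
    (fx : EuclideanSpace ℝ (Fin m) → EuclideanSpace ℝ (Fin n))
    (hfd : ∀ y ∈ Y, ∀ d : EuclideanSpace ℝ (Fin n),
      HasDerivAt (fun t : ℝ => f (x + t • d) y) ⟪fx y, d⟫ 0) :
    ∀ y ∈ Y, f x y = Fstar x →
      (∀ d : EuclideanSpace ℝ (Fin n), ⟪fx y, d⟫ ≤ ⟪gF, d⟫) ∧ gF = fx y := by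
  intro y hy hxy
  have key : ∀ d, ⟪fx y, d⟫ = ⟪gF, d⟫ := fun d =>
    HasLineDerivAt.eq_of_le_of_eq (g := (f · y)) (hfd y hy d) (hgF.hasLineDerivAt d)
      (fun z => hmax z y hy) hxy
  exact ⟨fun d => (key d).le, (ext_inner_right ℝ key).symm⟩
end

section
/- Let Γ ⊆ ℝⁿ be an open set and let G : ℝⁿ → ℝ be locally Lipschitz on an open set containing Γ. Let S be the set of points where G is differentiable. Suppose there exist constants c > 0, α > 0, η > 0 such that ‖∇G(u) − ∇G(v)‖ ≤ c‖u − v‖^α for all u, v ∈ S ∩ Γ with ‖u − v‖ ≤ η. Then G is differentiable at every point of Γ. -/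
/-!
Near `x ∈ Γ` the function `G` is Lipschitz, hence differentiable almost everywhere (Rademacher),
and the Hölder bound makes `∇G` uniformly continuous on the full-measure set of differentiability
points near `x`; so `∇G z` converges to some `L` as `z → x` outside null sets. The Lipschitz
function `G - ⟪L, ·⟫` then has a.e. gradient of norm at most `ε` on small balls around `x`. A
mean value inequality for Lipschitz functions with a.e. bounded derivative (FTC for absolutely
continuous functions along almost every segment, plus continuity) makes it `ε`-Lipschitz there,
which is differentiability of `G` at `x` with gradient `L`.
-/

open MeasureTheory Filter Set Topology Metric Interval
open AffineMap (lineMap)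

theorem AbsolutelyContinuousOnInterval.norm_sub_le_of_ae_norm_deriv_le {f : ℝ → ℝ} {a b C : ℝ}
    (hf : AbsolutelyContinuousOnInterval f a b) (h : ∀ᵐ t, t ∈ Ι a b → ‖deriv f t‖ ≤ C) :
    ‖f b - f a‖ ≤ C * |b - a| := by
  rw [← hf.integral_deriv_eq_sub]
  exact intervalIntegral.norm_integral_le_of_norm_le_const_ae h

section
variable {E : Type*} [NormedAddCommGroup E] [NormedSpace ℝ E] {f : E → ℝ} {K : NNReal} {s : Set E}

theorem LipschitzOnWith.norm_image_sub_le_of_ae_norm_fderiv_le_segment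
    (hf : LipschitzOnWith K f s) {a b : E} (hab : segment ℝ a b ⊆ s) {φ : E →L[ℝ] ℝ} {C : ℝ}
    (h : ∀ᵐ t : ℝ, t ∈ Ι (0 : ℝ) 1 → DifferentiableAt ℝ f (lineMap a b t) ∧
      ‖fderiv ℝ f (lineMap a b t) - φ‖ ≤ C) :
    ‖f b - f a - φ (b - a)‖ ≤ C * ‖b - a‖ := by
  set ψ : ℝ → ℝ := fun t => f (lineMap a b t) - φ (lineMap a b t)
  have hψ : AbsolutelyContinuousOnInterval ψ 0 1 := by
    refine LipschitzOnWith.absolutelyContinuousOnInterval (K := (K + ‖φ‖₊) * nndist a b) ?_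
    refine (hf.sub φ.lipschitz.lipschitzOnWith).comp (lipschitzWith_lineMap a b).lipschitzOnWith ?_
    rw [uIcc_of_le zero_le_one]
    exact (mapsTo_image _ _).mono_right (segment_eq_image_lineMap ℝ a b ▸ hab)
  have hderiv : ∀ᵐ t : ℝ, t ∈ Ι (0 : ℝ) 1 → ‖deriv ψ t‖ ≤ C * ‖b - a‖ := by
    filter_upwards [h] with t ht ht01
    obtain ⟨hdiff, hbound⟩ := ht ht01
    have : HasDerivAt ψ ((fderiv ℝ f (lineMap a b t) - φ) (b - a)) t :=
      (hdiff.hasFDerivAt.sub φ.hasFDerivAt).comp_hasDerivAt t AffineMap.hasDerivAt_lineMap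
    rw [this.deriv]
    exact (ContinuousLinearMap.le_opNorm _ _).trans (by gcongr)
  have := hψ.norm_sub_le_of_ae_norm_deriv_le hderiv
  simpa [ψ, map_sub, sub_sub_sub_comm] using this

variable [FiniteDimensional ℝ E] [MeasurableSpace E] [BorelSpace E]
  {μ : Measure E} [μ.IsAddHaarMeasure]

theorem ae_ae_lineMap_notMem {N : Set E} (hN : μ N = 0) :
    ∀ᵐ p ∂μ.prod μ, ∀ᵐ t : ℝ, lineMap p.1 p.2 t ∉ N := by
  obtain ⟨N', hNN', hN'm, hN'0⟩ := exists_measurable_superset_of_null hN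
  suffices ∀ᵐ t : ℝ, ∀ᵐ p ∂μ.prod μ, lineMap p.1 p.2 t ∉ N' by
    rw [← Measure.ae_ae_comm (hN'm.preimage (by fun_prop)).compl] at this
    filter_upwards [this] with p hp
    filter_upwards [hp] with t ht using fun htN => ht (hNN' htN)
  filter_upwards [volume.ae_ne 0] with t ht
  rw [Measure.ae_prod_iff_ae_ae (p := fun p : E × E => lineMap p.1 p.2 t ∉ N')
    (hN'm.preimage (by fun_prop)).compl]
  refine ae_of_all _ fun a => ?_
  have hpre : {b | lineMap a b t ∈ N'} =
      (t • ·) ⁻¹' ((((1 - t) • a) + ·) ⁻¹' N') := by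
    ext b; simp [AffineMap.lineMap_apply_module]
  rw [ae_iff]
  simp only [not_not]
  rw [hpre, Measure.addHaar_preimage_smul μ ht, measure_preimage_add, hN'0, mul_zero]

theorem LipschitzOnWith.ae_differentiableAt_of_isOpen
    (hf : LipschitzOnWith K f s) (hs : IsOpen s) :
    ∀ᵐ z ∂μ, z ∈ s → DifferentiableAt ℝ f z := by
  filter_upwards [hf.ae_differentiableWithinAt_of_mem] with z hz hzs
  exact (hz hzs).differentiableAt (hs.mem_nhds hzs)

theorem Convex.norm_image_sub_le_of_ae_norm_fderiv_le'
    (hs : Convex ℝ s) (hs' : IsOpen s) (hf : LipschitzOnWith K f s) {φ : E →L[ℝ] ℝ} {C : ℝ}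
    (h : ∀ᵐ z ∂μ, z ∈ s → ‖fderiv ℝ f z - φ‖ ≤ C) {x y : E} (hx : x ∈ s) (hy : y ∈ s) :
    ‖f y - f x - φ (y - x)‖ ≤ C * ‖y - x‖ := by
  set N := {z | z ∈ s ∧ ¬(DifferentiableAt ℝ f z ∧ ‖fderiv ℝ f z - φ‖ ≤ C)}
  have hN : μ N = 0 := by
    rw [measure_eq_zero_iff_ae_notMem]
    filter_upwards [h, hf.ae_differentiableAt_of_isOpen (μ := μ) hs'] with z hz hz' ⟨hzs, hbad⟩
    exact hbad ⟨hz' hzs, hz hzs⟩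
  -- The pairs violating the bound form an open set, null by Fubini and the one-segment case.
  set bad : Set (E × E) := s ×ˢ s ∩
    (fun p => ‖f p.2 - f p.1 - φ (p.2 - p.1)‖ - C * ‖p.2 - p.1‖) ⁻¹' Ioi 0
  have hbad_open : IsOpen bad := by
    refine ContinuousOn.isOpen_inter_preimage ?_ (hs'.prod hs') isOpen_Ioi
    have h1 : ContinuousOn (fun p : E × E => f p.1) (s ×ˢ s) :=
      hf.continuousOn.comp continuousOn_fst fun p hp => hp.1
    have h2 : ContinuousOn (fun p : E × E => f p.2) (s ×ˢ s) :=
      hf.continuousOn.comp continuousOn_snd fun p hp => hp.2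
    exact ((h2.sub h1).sub (φ.continuous.comp (by fun_prop)).continuousOn).norm.sub
      (by fun_prop)
  have hbad_null : μ.prod μ bad = 0 := by
    rw [measure_eq_zero_iff_ae_notMem]
    filter_upwards [ae_ae_lineMap_notMem hN] with p hp ⟨⟨hp1, hp2⟩, hpos⟩
    refine (not_lt.2 ?_) (sub_pos.1 (mem_preimage.1 hpos))
    refine hf.norm_image_sub_le_of_ae_norm_fderiv_le_segment (hs.segment_subset hp1 hp2) ?_
    filter_upwards [hp] with t ht ht01
    rw [uIoc_of_le zero_le_one] at ht01
    have hmem : lineMap p.1 p.2 t ∈ s :=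
      hs.lineMap_mem hp1 hp2 (Ioc_subset_Icc_self ht01)
    by_contra hcon
    exact ht ⟨hmem, hcon⟩
  have : (x, y) ∉ bad := by
    rw [hbad_open.measure_eq_zero_iff (μ.prod μ)] at hbad_null
    simp [hbad_null]
  simpa [bad, hx, hy] using this

theorem LipschitzOnWith.hasFDerivAt_of_tendsto_fderiv
    (hf : LipschitzOnWith K f s) {x : E} (hs : s ∈ 𝓝 x) {φ : E →L[ℝ] ℝ}
    (h : Tendsto (fderiv ℝ f) (𝓝 x ⊓ ae μ) (𝓝 φ)) : HasFDerivAt f φ x := by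
  rw [hasFDerivAt_iff_isLittleO, Asymptotics.isLittleO_iff]
  intro ε hε
  obtain ⟨U, hU, T, hT, hUT⟩ := mem_inf_iff.1 (h (closedBall_mem_nhds φ hε))
  obtain ⟨r, hr, hrU⟩ := Metric.mem_nhds_iff.1 (inter_mem hU hs)
  have hbound : ∀ᵐ z ∂μ, z ∈ ball x r → ‖fderiv ℝ f z - φ‖ ≤ ε := by
    filter_upwards [hT] with z hzT hzr
    simpa [dist_eq_norm] using hUT.superset ⟨(hrU hzr).1, hzT⟩
  filter_upwards [ball_mem_nhds x hr] with y hy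
  simpa using (convex_ball x r).norm_image_sub_le_of_ae_norm_fderiv_le' isOpen_ball
    (hf.mono fun z hz => (hrU hz).2) hbound (mem_ball_self hr) hy

end

theorem nhds_inf_ae_neBot {X : Type*} [TopologicalSpace X] [MeasurableSpace X] (μ : Measure X)
    [μ.IsOpenPosMeasure] (x : X) : (𝓝 x ⊓ ae μ).NeBot := by
  refine inf_neBot_iff.2 fun U hU T hT => ?_
  obtain ⟨z, hzU, hzT⟩ := (Measure.dense_of_ae hT).inter_open_nonempty _ isOpen_interior
    ⟨x, mem_interior_iff_mem_nhds.2 hU⟩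
  exact ⟨z, interior_subset hzU, hzT⟩

theorem HolderOnWith.of_dist_le {X Y : Type*} [PseudoMetricSpace X] [PseudoMetricSpace Y]
    {f : X → Y} {s : Set X} {C r : ℝ} (hC : 0 ≤ C) (hr : 0 ≤ r)
    (h : ∀ x ∈ s, ∀ y ∈ s, dist (f x) (f y) ≤ C * dist x y ^ r) :
    HolderOnWith C.toNNReal r.toNNReal f s := by
  intro x hx y hy
  rw [edist_dist, edist_dist, Real.coe_toNNReal r hr,
    ENNReal.ofReal_rpow_of_nonneg dist_nonneg hr]
  exact (ENNReal.ofReal_le_ofReal (h x hx y hy)).trans_eq (ENNReal.ofReal_mul hC)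

theorem stmt_2_general {n : ℕ} (Γ U : Set (EuclideanSpace ℝ (Fin n)))
    (hΓ : IsOpen Γ) (hΓU : Γ ⊆ U)
    (G : EuclideanSpace ℝ (Fin n) → ℝ)
    (hLip : ∀ x ∈ U, ∃ K : NNReal, ∃ t ∈ nhds x, LipschitzOnWith K G t)
    (c α η : ℝ) (hc : 0 < c) (hα : 0 < α) (hη : 0 < η)
    (hHolder : ∀ u v : EuclideanSpace ℝ (Fin n),
      DifferentiableAt ℝ G u → DifferentiableAt ℝ G v → u ∈ Γ → v ∈ Γ →
      ‖u - v‖ ≤ η → ‖gradient G u - gradient G v‖ ≤ c * ‖u - v‖ ^ α) :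
    ∀ x ∈ Γ, DifferentiableAt ℝ G x := by
  intro x hx
  obtain ⟨K, t, ht, hK⟩ := hLip x (hΓU hx)
  obtain ⟨ρ₀, hρ₀, hρ₀tΓ⟩ := Metric.mem_nhds_iff.1 (inter_mem ht (hΓ.mem_nhds hx))
  set ρ := min ρ₀ (η / 2)
  have hρ : 0 < ρ := lt_min hρ₀ (half_pos hη)
  have hBtΓ : ball x ρ ⊆ t ∩ Γ := (ball_subset_ball (min_le_left _ _)).trans hρ₀tΓ
  have hGB : LipschitzOnWith K G (ball x ρ) := hK.mono fun z hz => (hBtΓ hz).1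
  set D := ball x ρ ∩ {z | DifferentiableAt ℝ G z}
  have hD : D ∈ 𝓝 x ⊓ ae volume := by
    filter_upwards [mem_inf_of_left (ball_mem_nhds x hρ),
      mem_inf_of_right (hGB.ae_differentiableAt_of_isOpen isOpen_ball)] with z hzB hzD
    exact ⟨hzB, hzD hzB⟩
  have hHolderD : HolderOnWith c.toNNReal α.toNNReal (gradient G) D := by
    refine HolderOnWith.of_dist_le hc.le hα.le fun u hu v hv => ?_
    have huv : dist u v ≤ η := by
      linarith [dist_triangle_right u v x, mem_ball.1 hu.1, mem_ball.1 hv.1,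
        min_le_right ρ₀ (η / 2)]
    simpa only [dist_eq_norm] using
      hHolder u v hu.2 hv.2 (hBtΓ hu.1).2 (hBtΓ hv.1).2 (dist_eq_norm u v ▸ huv)
  have := nhds_inf_ae_neBot volume x
  obtain ⟨L, hL⟩ := CompleteSpace.complete <| (cauchy_nhds.mono inf_le_left).map_of_le
    (hHolderD.uniformContinuousOn (Real.toNNReal_pos.2 hα)) (le_principal_iff.2 hD)
  have hfderiv :
      Tendsto (fderiv ℝ G) (𝓝 x ⊓ ae volume) (𝓝 (InnerProductSpace.toDual ℝ _ L)) := by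
    rw [← toDual_comp_gradient]
    exact ((InnerProductSpace.toDual ℝ _).continuous.tendsto L).comp hL
  exact (hGB.hasFDerivAt_of_tendsto_fderiv (ball_mem_nhds x hρ) hfderiv).differentiableAt

/-- Hölder continuity of the gradient on the differentiability set
extends differentiability to the whole open set. -/
theorem stmt_2 {n : ℕ} (Γ U : Set (EuclideanSpace ℝ (Fin n)))
    (hΓ : IsOpen Γ) (hU : IsOpen U) (hΓU : Γ ⊆ U)
    (G : EuclideanSpace ℝ (Fin n) → ℝ)
    (hLip : ∀ x ∈ U, ∃ K : NNReal, ∃ t ∈ nhds x, LipschitzOnWith K G t)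
    (c α η : ℝ) (hc : 0 < c) (hα : 0 < α) (hη : 0 < η)
    (hHolder : ∀ u v : EuclideanSpace ℝ (Fin n),
      DifferentiableAt ℝ G u → DifferentiableAt ℝ G v → u ∈ Γ → v ∈ Γ →
      ‖u - v‖ ≤ η → ‖gradient G u - gradient G v‖ ≤ c * ‖u - v‖ ^ α) :
    ∀ x ∈ Γ, DifferentiableAt ℝ G x :=
  stmt_2_general Γ U hΓ hΓU G hLip c α η hc hα hη hHolder
end

section
/- Let r : [0, ∞) → (0, ∞) be continuous and nonincreasing, with θ ∈ [1/2, 1), C > 0, and suppose that for every 0 < δ < T, r(T) − r(δ) ≤ −C²(1−θ)(T − δ) r(T)^{θ/(1−θ)}. Then for all T > 0, r(T) ≤ (r(0)/(C²(1−θ) T))^{(1−θ)/θ}; in particular r(T) → 0 as T → ∞. -/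
open Filter Real Set Topology

/-!
Letting `δ → 0⁺` in the hypothesis (with `r δ ≤ r 0` and `r T > 0`) gives
`C² (1 - θ) T r(T)^{θ/(1-θ)} ≤ r(0)`, which is the decay bound after taking the
`(1 - θ)/θ`-th power; the bound tends to `0` as `T → ∞`.
-/

theorem mul_le_of_forall_sub_le_neg_mul {r : ℝ → ℝ} {c T : ℝ} (hmono : AntitoneOn r (Ici 0))
    (hT : 0 < T) (hrT : 0 ≤ r T) (h : ∀ δ, 0 < δ → δ < T → r T - r δ ≤ -c * (T - δ)) :
    c * T ≤ r 0 := by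
  have hev : ∀ᶠ δ in 𝓝[>] 0, c * (T - δ) ≤ r 0 := by
    filter_upwards [Ioo_mem_nhdsGT hT] with δ hδ
    have hrδ : r δ ≤ r 0 := hmono self_mem_Ici hδ.1.le hδ.1.le
    linarith [h δ hδ.1 hδ.2]
  have hlim : Tendsto (fun δ => c * (T - δ)) (𝓝[>] 0) (𝓝 (c * T)) := by
    have hcont : Continuous fun δ : ℝ => c * (T - δ) := by fun_prop
    exact (hcont.tendsto' 0 (c * T) (by simp)).mono_left nhdsWithin_le_nhds
  exact le_of_tendsto hlim hev

theorem le_rpow_inv_of_forall_sub_le {r : ℝ → ℝ} {c p : ℝ} (hc : 0 < c) (hp : 0 < p)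
    (hpos : ∀ t ∈ Ici (0 : ℝ), 0 < r t) (hmono : AntitoneOn r (Ici 0))
    (h : ∀ δ T, 0 < δ → δ < T → r T - r δ ≤ -c * (T - δ) * r T ^ p) {T : ℝ} (hT : 0 < T) :
    r T ≤ (r 0 / (c * T)) ^ p⁻¹ := by
  have hrT : 0 < r T := hpos T hT.le
  have hkey : c * r T ^ p * T ≤ r 0 :=
    mul_le_of_forall_sub_le_neg_mul hmono hT hrT.le fun δ hδ hδT =>
      (h δ T hδ hδT).trans_eq (by ring)
  rw [le_rpow_inv_iff_of_pos hrT.le (div_pos (hpos 0 self_mem_Ici) (by positivity)).le hp,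
    le_div_iff₀ (by positivity)]
  linarith

theorem tendsto_div_mul_rpow_atTop {a b q : ℝ} (hb : 0 < b) (hq : 0 < q) :
    Tendsto (fun T => (a / (b * T)) ^ q) atTop (𝓝 0) := by
  have h : Tendsto (fun T => a / (b * T)) atTop (𝓝 0) :=
    tendsto_const_nhds.div_atTop (tendsto_id.const_mul_atTop hb)
  simpa [zero_rpow hq.ne'] using h.rpow_const (Or.inr hq.le)

theorem stmt_4_general (r : ℝ → ℝ) (θ C : ℝ) (hθ : θ ∈ Set.Ico (1/2 : ℝ) 1) (hC : 0 < C)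
    (hpos : ∀ t ∈ Set.Ici (0:ℝ), 0 < r t)
    (hmono : AntitoneOn r (Set.Ici 0))
    (h : ∀ δ T : ℝ, 0 < δ → δ < T →
      r T - r δ ≤ -(C ^ 2) * (1 - θ) * (T - δ) * r T ^ (θ / (1 - θ))) :
    (∀ T > (0:ℝ), r T ≤ (r 0 / (C ^ 2 * (1 - θ) * T)) ^ ((1 - θ) / θ)) ∧
      Filter.Tendsto r Filter.atTop (nhds 0) := by
  obtain ⟨hθ_half, hθ_one⟩ := hθ
  have hθ0 : 0 < θ := by linarith
  have h1θ : 0 < 1 - θ := by linarith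
  have hc : 0 < C ^ 2 * (1 - θ) := by positivity
  have hbound : ∀ T > (0:ℝ), r T ≤ (r 0 / (C ^ 2 * (1 - θ) * T)) ^ ((1 - θ) / θ) := by
    intro T hT
    rw [← inv_div θ (1 - θ)]
    exact le_rpow_inv_of_forall_sub_le hc (div_pos hθ0 h1θ) hpos hmono
      (fun δ T hδ hδT => (h δ T hδ hδT).trans_eq (by ring)) hT
  have hlim := tendsto_div_mul_rpow_atTop (a := r 0) hc (div_pos h1θ hθ0)
  refine ⟨hbound, squeeze_zero' ?_ ?_ hlim⟩
  · filter_upwards [eventually_ge_atTop 0] with T hT using (hpos T hT).le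
  · filter_upwards [eventually_gt_atTop 0] with T hT using hbound T hT

/-- Polynomial decay of a positive nonincreasing continuous function
satisfying the averaged KL-type differential inequality. -/
theorem stmt_4 (r : ℝ → ℝ) (θ C : ℝ) (hθ : θ ∈ Set.Ico (1/2 : ℝ) 1) (hC : 0 < C)
    (hpos : ∀ t ∈ Set.Ici (0:ℝ), 0 < r t)
    (hcont : ContinuousOn r (Set.Ici 0))
    (hmono : AntitoneOn r (Set.Ici 0))
    (h : ∀ δ T : ℝ, 0 < δ → δ < T →
      r T - r δ ≤ -(C ^ 2) * (1 - θ) * (T - δ) * r T ^ (θ / (1 - θ))) :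
    (∀ T > (0:ℝ), r T ≤ (r 0 / (C ^ 2 * (1 - θ) * T)) ^ ((1 - θ) / θ)) ∧
      Filter.Tendsto r Filter.atTop (nhds 0) :=
  stmt_4_general r θ C hθ hC hpos hmono h
end

section
/- For any M > 0, ν ∈ (0, 1], δ > 0, and t ≥ 0, the inequality (M/(1+ν)) t^{1+ν} ≤ (1/2)(δ^{(ν−1)/(1+ν)} M^{2/(1+ν)} t² + δ) holds. -/
/-- Interpolation inequality converting a Hölder term into a
quadratic term plus a constant. -/
theorem stmt_8 (M ν δ t : ℝ) (hM : 0 < M) (hν : ν ∈ Set.Ioc (0:ℝ) 1)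
    (hδ : 0 < δ) (ht : 0 ≤ t) :
    M / (1 + ν) * t ^ (1 + ν) ≤
      (δ ^ ((ν - 1) / (1 + ν)) * M ^ (2 / (1 + ν)) * t ^ (2:ℝ) + δ) / 2 := by
  obtain ⟨hν0, hν1⟩ := hν
  have h1ν : (0:ℝ) < 1 + ν := by linarith
  set A : ℝ := δ ^ ((ν - 1) / (1 + ν)) * M ^ (2 / (1 + ν)) with hA
  have hApos : 0 < A := by positivity
  have hT : (0:ℝ) ≤ t ^ (2:ℝ) := by positivity
  have hθ0 : (0:ℝ) ≤ (1 + ν) / 2 := by linarith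
  have hθ1 : (0:ℝ) ≤ (1 - ν) / 2 := by linarith
  have key := Real.geom_mean_le_arith_mean2_weighted hθ0 hθ1
    (mul_nonneg hApos.le hT) hδ.le (by ring)
  have hAt : (A * t ^ (2:ℝ)) ^ ((1 + ν) / 2) * δ ^ ((1 - ν) / 2)
      = M * t ^ (1 + ν) := by
    rw [Real.mul_rpow hApos.le hT, hA,
      Real.mul_rpow (by positivity) (by positivity),
      ← Real.rpow_mul hδ.le, ← Real.rpow_mul hM.le, ← Real.rpow_mul ht]
    have e1 : (ν - 1) / (1 + ν) * ((1 + ν) / 2) = (ν - 1) / 2 := by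
      field_simp
    have e2 : 2 / (1 + ν) * ((1 + ν) / 2) = 1 := by field_simp
    have e3 : (2:ℝ) * ((1 + ν) / 2) = 1 + ν := by ring
    rw [e1, e2, e3, Real.rpow_one]
    have hδδ : δ ^ ((ν - 1) / 2) * δ ^ ((1 - ν) / 2) = 1 := by
      rw [← Real.rpow_add hδ, show (ν - 1) / 2 + (1 - ν) / 2 = 0 by ring, Real.rpow_zero]
    linear_combination (M * t ^ (1 + ν)) * hδδ
  rw [hAt] at key
  have hfinal : M / (1 + ν) * t ^ (1 + ν) = (M * t ^ (1 + ν)) / (1 + ν) := by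
    ring
  rw [hfinal, div_le_iff₀ h1ν]
  nlinarith [mul_nonneg hApos.le hT, mul_pos hν0 hδ]
end

section
/- Let θ ∈ (1/2, 1), δ > 0, and let {r_k} ⊂ (0, δ] be a nonincreasing sequence satisfying r_k − r_{k+1} ≥ β_k r_{k+1}^{2θ} with β̲ ≤ β_k ≤ β̄ for all k. Set C' = min{1/2, (2^{(2θ−1)/(2θ)} − 1) δ^{1−2θ} / ((2θ−1) β̄)}. Then for all k ≥ 1, r_k ≤ (1/(C'(2θ−1)β̲))^{1/(2θ−1)} k^{−1/(2θ−1)}. -/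
open Real

private lemma aux_bern {t p : ℝ} (ht0 : 0 < t) (ht1 : t ≤ 1) (hp0 : 0 ≤ p) (hp1 : p ≤ 1) :
    1 + p * (1 - t) ≤ t ^ (-p) := by
  have hs : (-1 : ℝ) ≤ t - 1 := by linarith
  have h1 : t ^ p ≤ 1 + p * (t - 1) := by
    have := rpow_one_add_le_one_add_mul_self hs hp0 hp1
    simpa using this
  have hpos : 0 < t ^ p := Real.rpow_pos_of_pos ht0 p
  have hps : 0 < 1 + p * (t - 1) := lt_of_lt_of_le hpos h1
  rw [Real.rpow_neg ht0.le]
  have h3 : (1 + p * (t - 1))⁻¹ ≤ (t ^ p)⁻¹ := inv_anti₀ hpos h1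
  have h4 : 1 + p * (1 - t) ≤ (1 + p * (t - 1))⁻¹ := by
    rw [inv_eq_one_div, le_div_iff₀ hps]
    nlinarith [sq_nonneg (p * (t - 1))]
  linarith

private lemma aux_key {a b p : ℝ} (ha : 0 < a) (hab : a ≤ b) (hp0 : 0 < p) (hp1 : p ≤ 1) :
    b ^ (-p) + p * (b - a) * b ^ (-(p + 1)) ≤ a ^ (-p) := by
  have hb : 0 < b := lt_of_lt_of_le ha hab
  have ht0 : 0 < a / b := div_pos ha hb
  have ht1 : a / b ≤ 1 := (div_le_one hb).mpr hab
  have h := aux_bern ht0 ht1 hp0.le hp1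
  rw [Real.div_rpow ha.le hb.le] at h
  have hbp : 0 < b ^ (-p) := Real.rpow_pos_of_pos hb _
  have h2 : b ^ (-p) * (1 + p * (1 - a / b)) ≤ a ^ (-p) := by
    have := mul_le_mul_of_nonneg_left h hbp.le
    calc b ^ (-p) * (1 + p * (1 - a / b)) ≤ b ^ (-p) * (a ^ (-p) / b ^ (-p)) := this
      _ = a ^ (-p) := by field_simp
  have hb1 : b ^ (-(p + 1)) = b ^ (-p) * b⁻¹ := by
    rw [show -(p + 1) = -p + (-1) by ring, Real.rpow_add hb, Real.rpow_neg_one]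
  calc b ^ (-p) + p * (b - a) * b ^ (-(p + 1))
      = b ^ (-p) * (1 + p * (1 - a / b)) := by rw [hb1]; field_simp
    _ ≤ a ^ (-p) := h2

set_option maxHeartbeats 1000000 in
/-- Sublinear decay of a positive nonincreasing sequence under the
KL recursion with exponent θ ∈ (1/2, 1). -/
theorem stmt_12 (θ δ βlow βup : ℝ) (hθ : θ ∈ Set.Ioo (1/2 : ℝ) 1) (hδ : 0 < δ)
    (hβlow : 0 < βlow) (r β : ℕ → ℝ)
    (hr : ∀ k, 0 < r k ∧ r k ≤ δ) (hmono : ∀ k, r (k + 1) ≤ r k)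
    (hβk : ∀ k, βlow ≤ β k ∧ β k ≤ βup)
    (hrec : ∀ k, r k - r (k + 1) ≥ β k * r (k + 1) ^ (2 * θ)) :
    ∀ k : ℕ, 1 ≤ k →
      r k ≤ (1 / (min (1/2 : ℝ)
          (((2:ℝ) ^ ((2 * θ - 1) / (2 * θ)) - 1) * δ ^ (1 - 2 * θ) / ((2 * θ - 1) * βup))
        * (2 * θ - 1) * βlow)) ^ ((1:ℝ) / (2 * θ - 1))
        * (k : ℝ) ^ (-(1:ℝ) / (2 * θ - 1)) := by
  obtain ⟨hθ1, hθ2⟩ := hθ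
  set p : ℝ := 2 * θ - 1 with hpdef
  set q : ℝ := 2 * θ with hqdef
  have hq1 : 1 < q := by rw [hqdef]; linarith
  have hp0 : 0 < p := by rw [hpdef]; linarith
  have hp1 : p < 1 := by rw [hpdef]; linarith
  rw [show (1 : ℝ) - q = -p by rw [hpdef, hqdef]; ring]
  have hβup : 0 < βup := lt_of_lt_of_le hβlow ((hβk 0).1.trans (hβk 0).2)
  set C : ℝ := min (1/2 : ℝ)
      (((2:ℝ) ^ (p / q) - 1) * δ ^ (-p) / (p * βup)) with hCdef
  have h2pq : (1 : ℝ) < (2:ℝ) ^ (p / q) := by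
    exact (Real.one_lt_rpow_iff_of_pos (by norm_num)).mpr
      (Or.inl ⟨by norm_num, by positivity⟩)
  have hδp : 0 < δ ^ (-p) := Real.rpow_pos_of_pos hδ _
  have hC0 : 0 < C := by
    apply lt_min (by norm_num)
    apply div_pos (mul_pos (by linarith) hδp) (by positivity)
  have hC2 : C ≤ 1/2 := min_le_left _ _
  set M : ℝ := C * p * βlow with hMdef
  have hM0 : 0 < M := by positivity
  -- per-step estimate
  have hstep : ∀ k, (r k) ^ (-p) + M ≤ (r (k+1)) ^ (-p) := by
    intro k
    obtain ⟨ha, haδ⟩ := hr (k+1)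
    obtain ⟨hb, hbδ⟩ := hr k
    have hab : r (k+1) ≤ r k := hmono k
    have hrecK := hrec k
    have hβ1 := (hβk k).1
    have hβ2 := (hβk k).2
    have hβk0 : 0 < β k := lt_of_lt_of_le hβlow hβ1
    have haq : 0 < r (k+1) ^ q := Real.rpow_pos_of_pos ha q
    have hbq : 0 < r k ^ q := Real.rpow_pos_of_pos hb q
    have key : p * C * β k ≤ (r (k+1)) ^ (-p) - (r k) ^ (-p) := by
      by_cases hcase : r k ^ q ≤ 2 * r (k+1) ^ q
      · -- case 1
        have h1 := aux_key ha hab hp0 hp1.le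
        rw [show -(p + 1) = -q by rw [hpdef, hqdef]; ring] at h1
        have h3 : r k ^ (-q) = (r k ^ q)⁻¹ := Real.rpow_neg hb.le q
        have h2 : β k * r (k+1) ^ q * (r k ^ q)⁻¹ ≤ (r k - r (k+1)) * (r k ^ q)⁻¹ :=
          mul_le_mul_of_nonneg_right hrecK (by positivity)
        have hbase : (1:ℝ)/2 * β k * r k ^ q ≤ β k * r (k+1) ^ q := by nlinarith
        have h4 : (1:ℝ)/2 * β k ≤ β k * r (k+1) ^ q * (r k ^ q)⁻¹ := by
          have h := mul_le_mul_of_nonneg_right hbase (inv_nonneg.mpr hbq.le)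
          calc (1:ℝ)/2 * β k = (1/2 * β k * r k ^ q) * (r k ^ q)⁻¹ := by
                field_simp
            _ ≤ β k * r (k+1) ^ q * (r k ^ q)⁻¹ := h
        have h5 : p * C * β k ≤ p * ((1:ℝ)/2 * β k) := by
          have hcb : C * β k ≤ 1/2 * β k := mul_le_mul_of_nonneg_right hC2 hβk0.le
          rw [mul_assoc]
          exact mul_le_mul_of_nonneg_left hcb hp0.le
        have h6 : p * ((1:ℝ)/2 * β k) ≤ p * ((r k - r (k+1)) * (r k ^ q)⁻¹) :=
          mul_le_mul_of_nonneg_left (le_trans h4 h2) hp0.le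
        rw [h3] at h1
        have h7 : p * (r k - r (k+1)) * (r k ^ q)⁻¹
            = p * ((r k - r (k+1)) * (r k ^ q)⁻¹) := by ring
        rw [h7] at h1
        calc p * C * β k ≤ p * ((1:ℝ)/2 * β k) := h5
          _ ≤ p * ((r k - r (k+1)) * (r k ^ q)⁻¹) := h6
          _ ≤ r (k+1) ^ (-p) - r k ^ (-p) := by linarith
      · -- case 2
        push_neg at hcase
        have hqne : q ≠ 0 := by positivity
        have e1 : ∀ x : ℝ, 0 < x → x ^ (-p) = (x ^ q) ^ (-(p/q)) := by
          intro x hx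
          rw [← Real.rpow_mul hx.le]
          congr 1
          field_simp
        have h6 : (r k ^ q / 2) ^ (-(p/q)) ≤ (r (k+1) ^ q) ^ (-(p/q)) := by
          exact Real.rpow_le_rpow_of_nonpos haq (by linarith)
            (neg_nonpos.mpr (le_of_lt (by positivity)))
        have e2 : (r k ^ q / 2) ^ (-(p/q)) = r k ^ (-p) * (2:ℝ) ^ (p/q) := by
          rw [Real.div_rpow hbq.le (by norm_num : (0:ℝ) ≤ 2), ← e1 _ hb,
            Real.rpow_neg (by norm_num : (0:ℝ) ≤ 2), div_eq_mul_inv, inv_inv]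
        have h7 : r k ^ (-p) * (2:ℝ) ^ (p/q) ≤ r (k+1) ^ (-p) := by
          calc r k ^ (-p) * (2:ℝ) ^ (p/q) = (r k ^ q / 2) ^ (-(p/q)) := e2.symm
            _ ≤ (r (k+1) ^ q) ^ (-(p/q)) := h6
            _ = r (k+1) ^ (-p) := (e1 _ ha).symm
        have hbδp : δ ^ (-p) ≤ r k ^ (-p) :=
          Real.rpow_le_rpow_of_nonpos hb hbδ (by linarith)
        have hCsnd : C * (p * βup) ≤ ((2:ℝ) ^ (p/q) - 1) * δ ^ (-p) := by
          have := min_le_right (1/2 : ℝ)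
            (((2:ℝ) ^ (p / q) - 1) * δ ^ (-p) / (p * βup))
          rw [← hCdef] at this
          calc C * (p * βup)
              ≤ (((2:ℝ) ^ (p / q) - 1) * δ ^ (-p) / (p * βup)) * (p * βup) :=
                mul_le_mul_of_nonneg_right this (by positivity)
            _ = ((2:ℝ) ^ (p/q) - 1) * δ ^ (-p) := by field_simp
        have hrpos : 0 < r k ^ (-p) := Real.rpow_pos_of_pos hb _
        have h8 : ((2:ℝ) ^ (p/q) - 1) * δ ^ (-p) ≤ ((2:ℝ) ^ (p/q) - 1) * r k ^ (-p) :=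
          mul_le_mul_of_nonneg_left hbδp (by linarith)
        have h9 : p * C * β k ≤ C * (p * βup) := by
          calc p * C * β k ≤ p * C * βup :=
                mul_le_mul_of_nonneg_left hβ2 (by positivity)
            _ = C * (p * βup) := by ring
        have hfin : ((2:ℝ) ^ (p/q) - 1) * r k ^ (-p)
            ≤ r (k+1) ^ (-p) - r k ^ (-p) := by
          have hexp : ((2:ℝ) ^ (p/q) - 1) * r k ^ (-p)
              = r k ^ (-p) * (2:ℝ) ^ (p/q) - r k ^ (-p) := by ring
          rw [hexp]
          linarith [h7]
        calc p * C * β k ≤ C * (p * βup) := h9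
          _ ≤ ((2:ℝ) ^ (p/q) - 1) * δ ^ (-p) := hCsnd
          _ ≤ ((2:ℝ) ^ (p/q) - 1) * r k ^ (-p) := h8
          _ ≤ r (k+1) ^ (-p) - r k ^ (-p) := hfin
    have hMle : M ≤ p * C * β k := by
      rw [hMdef]
      have : C * p * βlow ≤ C * p * β k :=
        mul_le_mul_of_nonneg_left hβ1 (by positivity)
      linarith
    linarith
  -- telescoping
  have htel : ∀ k : ℕ, (k : ℝ) * M ≤ (r k) ^ (-p) := by
    intro k
    induction k with
    | zero =>
        simp only [Nat.cast_zero, zero_mul]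
        exact (Real.rpow_pos_of_pos (hr 0).1 _).le
    | succ n ih =>
        have := hstep n
        push_cast
        linarith
  -- conclude
  intro k hk
  obtain ⟨hrk, hrkδ⟩ := hr k
  have hk0 : 0 < (k : ℝ) := by exact_mod_cast Nat.pos_of_ne_zero (by omega)
  have hkM : 0 < (k : ℝ) * M := mul_pos hk0 hM0
  have hrp : 0 < r k ^ p := Real.rpow_pos_of_pos hrk p
  have h1 : r k ^ p ≤ ((k : ℝ) * M)⁻¹ := by
    have hne : r k ^ (-p) = (r k ^ p)⁻¹ := Real.rpow_neg hrk.le p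
    have h2 := htel k
    rw [hne] at h2
    calc r k ^ p = ((r k ^ p)⁻¹)⁻¹ := by rw [inv_inv]
      _ ≤ ((k:ℝ) * M)⁻¹ := inv_anti₀ hkM h2
  have h3 : r k = (r k ^ p) ^ (p⁻¹) := by
    rw [← Real.rpow_mul hrk.le, mul_inv_cancel₀ (ne_of_gt hp0), Real.rpow_one]
  have h4 : r k ≤ (((k:ℝ) * M)⁻¹) ^ (p⁻¹) := by
    rw [h3]
    exact Real.rpow_le_rpow hrp.le h1 (by positivity)
  have h5 : (((k:ℝ) * M)⁻¹) ^ (p⁻¹) = (1 / M) ^ ((1:ℝ)/p) * (k:ℝ) ^ (-(1:ℝ)/p) := by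
    rw [mul_inv, Real.mul_rpow (by positivity) (by positivity),
      Real.inv_rpow hk0.le, Real.inv_rpow hM0.le,
      show -(1:ℝ)/p = -(p⁻¹) by field_simp,
      Real.rpow_neg hk0.le, one_div M, Real.inv_rpow hM0.le, one_div p]
    ring
  rw [h5] at h4
  exact h4
end

section
/- Let φ(x, y) = x(cos y − 1) on [1,2] × [π/4, π], and set φ*(x) = max_{π/4 ≤ y ≤ π} φ(x,y) = x(cos(π/4) − 1). Then for every x ∈ [1,2] and every y ∈ [π/4, π] with 0 < φ*(x) − φ(x,y) ≤ (√2/2) x, the inequality 2^{1/4} (φ*(x) − φ(x,y))^{1/2} ≤ dist(0, ∇_y φ(x,y) − N_{[π/4, π]}(y)) holds, where ∇_y φ(x,y) = −x sin y and N_{[π/4,π]}(y) is the normal cone to [π/4, π] at y. -/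
/-- Local KL inequality with C = 2^{1/4}, θ = 1/2 for
φ(x,y) = x (cos y − 1) on [1,2] × [π/4, π]. The set
{w : ∀ z ∈ [π/4,π], w(z−y) ≤ 0} is the normal cone to [π/4,π] at y, so the
per-element inequality is exactly 2^{1/4}(φ*(x) − φ(x,y))^{1/2} ≤ dist(0, ∇_y φ − N(y)). -/
theorem stmt_17 (x y : ℝ) (hx : x ∈ Set.Icc (1:ℝ) 2)
    (hy : y ∈ Set.Icc (Real.pi / 4) Real.pi)
    (hlev_pos : 0 < x * (Real.cos (Real.pi / 4) - Real.cos y))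
    (hlev_le : x * (Real.cos (Real.pi / 4) - Real.cos y) ≤ Real.sqrt 2 / 2 * x) :
    ∀ w : ℝ, (∀ z ∈ Set.Icc (Real.pi / 4) Real.pi, w * (z - y) ≤ 0) →
      (2:ℝ) ^ ((1:ℝ) / 4) * (x * (Real.cos (Real.pi / 4) - Real.cos y)) ^ ((1:ℝ) / 2)
        ≤ |(-x * Real.sin y) - w| := by
  intro w hw
  obtain ⟨hx1, hx2⟩ := hx
  obtain ⟨hy1, hy2⟩ := hy
  have hpi := Real.pi_pos
  have hxpos : (0:ℝ) < x := lt_of_lt_of_le one_pos hx1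
  have hs : Real.sqrt 2 ^ 2 = 2 := Real.sq_sqrt (by norm_num)
  have hs0 : (0:ℝ) < Real.sqrt 2 := Real.sqrt_pos.mpr (by norm_num)
  rw [Real.cos_pi_div_four] at hlev_pos hlev_le ⊢
  -- cos y < √2/2
  have hcy : Real.cos y < Real.sqrt 2 / 2 := by nlinarith
  -- cos y ≥ 0
  have hcy0 : 0 ≤ Real.cos y := by nlinarith
  -- y > π/4
  have hy1' : Real.pi / 4 < y := by
    by_contra h
    push_neg at h
    have : y = Real.pi / 4 := le_antisymm h hy1
    rw [this, Real.cos_pi_div_four] at hcy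
    linarith
  -- y < π
  have hy2' : y < Real.pi := by
    by_contra h
    push_neg at h
    have : y = Real.pi := le_antisymm hy2 h
    rw [this, Real.cos_pi] at hcy0
    linarith
  -- w = 0
  have hw1 := hw (Real.pi / 4) ⟨le_refl _, by linarith⟩
  have hw2 := hw Real.pi ⟨by linarith, le_refl _⟩
  have hwge : 0 ≤ w := by nlinarith
  have hwle : w ≤ 0 := by nlinarith
  have hw0 : w = 0 := le_antisymm hwle hwge
  subst hw0
  -- sin y > 0
  have hsin : 0 < Real.sin y := Real.sin_pos_of_pos_of_lt_pi (by linarith) hy2'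
  have habs : |(-x * Real.sin y) - 0| = x * Real.sin y := by
    rw [sub_zero, neg_mul, abs_neg, abs_of_nonneg (by positivity)]
  rw [habs]
  set A := x * (Real.sqrt 2 / 2 - Real.cos y) with hA
  have hA0 : 0 < A := hlev_pos
  -- 2^{1/4} * A^{1/2} = sqrt (sqrt 2 * A)
  have hkey : (2:ℝ) ^ ((1:ℝ)/4) * A ^ ((1:ℝ)/2) = Real.sqrt (Real.sqrt 2 * A) := by
    rw [Real.sqrt_eq_rpow, Real.mul_rpow (Real.sqrt_nonneg 2) hA0.le,
      Real.sqrt_eq_rpow, ← Real.rpow_mul (by norm_num : (0:ℝ) ≤ 2)]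
    norm_num
  rw [hkey]
  have hsq : Real.sqrt 2 * A ≤ (x * Real.sin y) ^ 2 := by
    have hpyth := Real.sin_sq_add_cos_sq y
    have h1t : Real.cos y ^ 2 ≤ Real.sqrt 2 * Real.cos y := by nlinarith
    nlinarith [sq_nonneg (Real.sin y), mul_pos hxpos hxpos]
  calc Real.sqrt (Real.sqrt 2 * A) ≤ Real.sqrt ((x * Real.sin y) ^ 2) :=
        Real.sqrt_le_sqrt hsq
    _ = x * Real.sin y := Real.sqrt_sq (by positivity)
end

section
/- Let g be L-smooth on dom q, q proper closed convex, h = g + q, and suppose the iterates of the proximal gradient method satisfy h(z^{k+1}) + a_k‖z^{k+1} − z^k‖² ≤ h(z^k) and b_k · dist(0, ∂h(z^{k+1})) ≤ ‖z^{k+1} − z^k‖ with a_k ≥ a̲ > 0, and that h satisfies the KL inequality C(h(z) − h*)^θ ≤ dist(0, ∂h(z)) on the sublevel set {h ≤ h* + δ} with h(z⁰) ≤ h* + δ. Then with β_k = a_k b_k² C², the residuals r_k = h(z^k) − h* satisfy r_k − r_{k+1} ≥ β_k r_{k+1}^{2θ} for all k ≥ 0. -/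
/-! Sufficient decrease gives `r_k - r_{k+1} ≥ a_k ‖z^{k+1} - z^k‖²`, and it keeps every iterate in
the sublevel set where the KL inequality holds. There, the relative error bound and KL give
`b_k C r_{k+1}^θ ≤ ‖z^{k+1} - z^k‖`; squaring this and inserting it into the first inequality
yields the recursion. -/

open Real

lemma antitone_of_succ_add_le {u c : ℕ → ℝ} (hc : ∀ k, 0 ≤ c k)
    (hdec : ∀ k, u (k + 1) + c k ≤ u k) : Antitone u :=
  antitone_nat_of_succ_le fun k => by linarith [hc k, hdec k]

lemma mul_le_of_forall_exists_le_add {α : Type*} {S : Set α} {f : α → ℝ} {b m t : ℝ}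
    (hb : 0 ≤ b) (hm : ∀ v ∈ S, m ≤ f v) (happrox : ∀ ε > 0, ∃ v ∈ S, b * f v ≤ t + ε) :
    b * m ≤ t := by
  refine le_of_forall_pos_le_add fun ε hε => ?_
  obtain ⟨v, hv, hle⟩ := happrox ε hε
  exact (mul_le_mul_of_nonneg_left (hm v hv) hb).trans hle

lemma mul_rpow_two_mul_le_sub {a b C θ r r' Δ : ℝ} (ha : 0 ≤ a) (hb : 0 ≤ b) (hC : 0 ≤ C)
    (hθ : 0 < θ) (hr' : 0 ≤ r') (hdec : r' + a * Δ ^ 2 ≤ r)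
    (hKL : 0 < r' → b * (C * r' ^ θ) ≤ Δ) :
    a * b ^ 2 * C ^ 2 * r' ^ (2 * θ) ≤ r - r' := by
  have hstep : 0 ≤ a * Δ ^ 2 := by positivity
  rcases hr'.eq_or_lt with rfl | hpos
  · rw [zero_rpow (by positivity)]
    linarith
  · have hsq : (b * (C * r' ^ θ)) ^ 2 ≤ Δ ^ 2 :=
      pow_le_pow_left₀ (by positivity) (hKL hpos) 2
    calc a * b ^ 2 * C ^ 2 * r' ^ (2 * θ) = a * (b * (C * r' ^ θ)) ^ 2 := by
          rw [mul_comm 2 θ, rpow_mul hr', rpow_two]; ring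
      _ ≤ a * Δ ^ 2 := mul_le_mul_of_nonneg_left hsq ha
      _ ≤ r - r' := by linarith

theorem stmt_18_general {d : ℕ}
    (h : EuclideanSpace ℝ (Fin d) → ℝ)
    (subh : EuclideanSpace ℝ (Fin d) → Set (EuclideanSpace ℝ (Fin d)))
    (z : ℕ → EuclideanSpace ℝ (Fin d)) (a b : ℕ → ℝ)
    (alow : ℝ) (halow : 0 < alow) (ha : ∀ k, alow ≤ a k) (hb : ∀ k, 0 < b k)
    (C θ δ hstar : ℝ) (hC : 0 < C) (hθ : θ ∈ Set.Ico (1/2 : ℝ) 1)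
    (hinf : ∀ u, hstar ≤ h u)
    (hdec : ∀ k, h (z (k + 1)) + a k * ‖z (k + 1) - z k‖ ^ 2 ≤ h (z k))
    (herr : ∀ k, ∀ ε > (0:ℝ), ∃ v ∈ subh (z (k + 1)),
      b k * ‖v‖ ≤ ‖z (k + 1) - z k‖ + ε)
    (hKL : ∀ u, hstar < h u → h u ≤ hstar + δ →
      ∀ v ∈ subh u, C * (h u - hstar) ^ θ ≤ ‖v‖)
    (h0 : h (z 0) ≤ hstar + δ) :
    ∀ k : ℕ, (h (z k) - hstar) - (h (z (k + 1)) - hstar)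
      ≥ a k * b k ^ 2 * C ^ 2 * (h (z (k + 1)) - hstar) ^ (2 * θ) := by
  have hapos : ∀ k, 0 ≤ a k := fun k => halow.le.trans (ha k)
  have hanti : Antitone fun k => h (z k) :=
    antitone_of_succ_add_le (fun k => by have := hapos k; positivity) hdec
  have hsublevel : ∀ k, h (z k) ≤ hstar + δ := fun k => (hanti (Nat.zero_le k)).trans h0
  intro k
  refine mul_rpow_two_mul_le_sub (Δ := ‖z (k + 1) - z k‖) (hapos k) (hb k).le hC.le
    (by linarith [hθ.1]) (sub_nonneg.2 (hinf _)) (by linarith [hdec k]) fun hpos => ?_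
  exact mul_le_of_forall_exists_le_add (hb k).le
    (hKL _ (sub_pos.1 hpos) (hsublevel (k + 1))) (herr k)

/-- Sufficient decrease + relative error bound + KL inequality imply
the residual recursion r_k − r_{k+1} ≥ β_k r_{k+1}^{2θ}. -/
theorem stmt_18 {d : ℕ}
    (g q h : EuclideanSpace ℝ (Fin d) → ℝ)
    (hh : ∀ z, h z = g z + q z)
    (g' : EuclideanSpace ℝ (Fin d) → EuclideanSpace ℝ (Fin d)) (L : ℝ)
    (hgrad : ∀ z, HasGradientAt g (g' z) z)
    (hsmooth : ∀ u v, ‖g' u - g' v‖ ≤ L * ‖u - v‖)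
    (hq_convex : ConvexOn ℝ Set.univ q) (hq_lsc : LowerSemicontinuous q)
    (subh : EuclideanSpace ℝ (Fin d) → Set (EuclideanSpace ℝ (Fin d)))
    (hsubh : ∀ z, subh z =
      {v | ∃ w, (∀ u, q z + (inner ℝ w (u - z) : ℝ) ≤ q u) ∧ v = g' z + w})
    (z : ℕ → EuclideanSpace ℝ (Fin d)) (a b : ℕ → ℝ)
    (alow : ℝ) (halow : 0 < alow) (ha : ∀ k, alow ≤ a k) (hb : ∀ k, 0 < b k)
    (C θ δ hstar : ℝ) (hC : 0 < C) (hθ : θ ∈ Set.Ico (1/2 : ℝ) 1) (hδ : 0 < δ)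
    (hinf : ∀ u, hstar ≤ h u)
    (hdec : ∀ k, h (z (k + 1)) + a k * ‖z (k + 1) - z k‖ ^ 2 ≤ h (z k))
    (herr : ∀ k, ∀ ε > (0:ℝ), ∃ v ∈ subh (z (k + 1)),
      b k * ‖v‖ ≤ ‖z (k + 1) - z k‖ + ε)
    (hKL : ∀ u, hstar < h u → h u ≤ hstar + δ →
      ∀ v ∈ subh u, C * (h u - hstar) ^ θ ≤ ‖v‖)
    (h0 : h (z 0) ≤ hstar + δ) :
    ∀ k : ℕ, (h (z k) - hstar) - (h (z (k + 1)) - hstar)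
      ≥ a k * b k ^ 2 * C ^ 2 * (h (z (k + 1)) - hstar) ^ (2 * θ) :=
  stmt_18_general h subh z a b alow halow ha hb C θ δ hstar hC hθ hinf hdec herr hKL h0
end
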